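/- arXiv:2406.00417 — 9 statements merged into one kernel-verified Lean document; each statement's English description precedes it below -/
import Mathlib

section
/- With the setup of the previous statement (functors i_*, i^*, j_!, j^* with i^* i_* ≅ Id, j^* j_! ≅ Id, j^* i_* = 0, i^* j_! = 0, and ideals I', I''), define I = { α | i^*(α) ∈ I', j^*(α) ∈ I'' }. Then i^*(I) = I' , where i^*(I) denotes the image ideal. Moreover I' = { α' a morphism of T' | i_*(α') ∈ I }. -/
open CategoryTheory Category Limits

/-- A class of morphisms in a category. -/
abbrev MorphismClass (C : Type*) [Category C] := ∀ ⦃X Y : C⦄, (X ⟶ Y) → Prop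

/-- An ideal of a preadditive category: an additive subgroup of each Hom-group, closed
under arbitrary pre- and post-composition. -/
structure CatIdeal (C : Type*) [Category C] [Preadditive C] where
  mem : MorphismClass C
  zero_mem : ∀ (X Y : C), mem (0 : X ⟶ Y)
  neg_mem : ∀ ⦃X Y : C⦄ ⦃f : X ⟶ Y⦄, mem f → mem (-f)
  add_mem : ∀ ⦃X Y : C⦄ ⦃f g : X ⟶ Y⦄, mem f → mem g → mem (f + g)
  comp_mem : ∀ ⦃W X Y Z : C⦄ (h : W ⟶ X) ⦃f : X ⟶ Y⦄ (k : Y ⟶ Z),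
    mem f → mem (h ≫ f ≫ k)

/-- The image ideal `F(I)`: all morphisms of the form `g ≫ F(α) ≫ h` with `α ∈ I`. -/
def imageMem {C D : Type*} [Category C] [Category D] (F : C ⥤ D)
    (I : MorphismClass C) : MorphismClass D :=
  fun A B f => ∃ (X Y : C) (α : X ⟶ Y) (g : A ⟶ F.obj X) (h : F.obj Y ⟶ B),
    I α ∧ f = g ≫ F.map α ≫ h

/-- The glued morphism class `I = {α | i^*(α) ∈ I', j^*(α) ∈ I''}`. -/
def glueMem {T' T T'' : Type*} [Category T'] [Category T] [Category T'']
    [Preadditive T'] [Preadditive T'']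
    (iUpper : T ⥤ T') (jUpper : T ⥤ T'')
    (I' : CatIdeal T') (I'' : CatIdeal T'') : MorphismClass T :=
  fun _ _ f => I'.mem (iUpper.map f) ∧ I''.mem (jUpper.map f)


/-! Since `i^* i_* ≅ Id` and `j^* i_* = 0`, the morphism `i_*(α')` lies in `I` exactly when
`α' ∈ I'`. Every `α' ∈ I'` is then, up to that isomorphism, the image `i^*(i_*(α'))` of a
morphism of `I`; conversely `i^*(I) ⊆ I'` by the very definition of `I`. -/

namespace CatIdeal

variable {C D : Type*} [Category C] [Category D] [Preadditive C]

lemma mem_map_iff_of_iso (I : CatIdeal C) {F G : D ⥤ C} (e : F ≅ G) {X Y : D} (f : X ⟶ Y) :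
    I.mem (F.map f) ↔ I.mem (G.map f) := by
  refine ⟨fun hf => ?_, fun hf => ?_⟩
  · rw [← NatIso.naturality_1 e f]
    exact I.comp_mem _ _ hf
  · rw [← NatIso.naturality_2 e f]
    exact I.comp_mem _ _ hf

lemma mem_of_imageMem (I : CatIdeal C) {F : D ⥤ C} {J : MorphismClass D}
    (hJ : ∀ ⦃X Y : D⦄ (α : X ⟶ Y), J α → I.mem (F.map α)) {A B : C} {f : A ⟶ B}
    (hf : imageMem F J f) : I.mem f := by
  obtain ⟨X, Y, α, g, h, hα, rfl⟩ := hf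
  exact I.comp_mem g h (hJ α hα)

end CatIdeal

lemma imageMem_of_iso {C D : Type*} [Category C] [Category D] {F : C ⥤ D} {G : D ⥤ C}
    (e : G ⋙ F ≅ 𝟭 D) {J : MorphismClass C} {X Y : D} {f : X ⟶ Y} (hf : J (G.map f)) :
    imageMem F J f :=
  ⟨G.obj X, G.obj Y, G.map f, e.inv.app X, e.hom.app Y, hf, (NatIso.naturality_1 e f).symm⟩

lemma glueMem_map_iff {T' T T'' : Type*} [Category T'] [Category T] [Category T'']
    [Preadditive T'] [Preadditive T''] {iStar : T' ⥤ T} {iUpper : T ⥤ T'} {jUpper : T ⥤ T''}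
    (e : iStar ⋙ iUpper ≅ 𝟭 T') (h : ∀ X : T', IsZero (jUpper.obj (iStar.obj X)))
    (I' : CatIdeal T') (I'' : CatIdeal T'') ⦃X Y : T'⦄ (f : X ⟶ Y) :
    glueMem iUpper jUpper I' I'' (iStar.map f) ↔ I'.mem f := by
  have hj : jUpper.map (iStar.map f) = 0 := (h X).eq_of_src _ _
  simp only [glueMem, hj, I''.zero_mem, and_true]
  exact I'.mem_map_iff_of_iso e f

theorem stmt3_general {T' T T'' : Type*} [Category T'] [Category T] [Category T'']
    [Preadditive T'] [Preadditive T'']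
    (iStar : T' ⥤ T) (iUpper : T ⥤ T') (jUpper : T ⥤ T'')
    (e₁ : iStar ⋙ iUpper ≅ 𝟭 T')
    (h₁ : ∀ X : T', IsZero (jUpper.obj (iStar.obj X)))
    (I' : CatIdeal T') (I'' : CatIdeal T'') :
    (∀ ⦃X Y : T'⦄ (f : X ⟶ Y),
        imageMem iUpper (glueMem iUpper jUpper I' I'') f ↔ I'.mem f) ∧
    (∀ ⦃X Y : T'⦄ (f : X ⟶ Y),
        I'.mem f ↔ glueMem iUpper jUpper I' I'' (iStar.map f)) := by
  have hglue := glueMem_map_iff e₁ h₁ I' I''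
  refine ⟨fun X Y f => ⟨I'.mem_of_imageMem (fun _ _ _ hα => hα.1), fun hf => ?_⟩,
    fun X Y f => (hglue f).symm⟩
  exact imageMem_of_iso e₁ ((hglue f).2 hf)

/-- With `I = {α | i^*(α) ∈ I', j^*(α) ∈ I''}`, one has `i^*(I) = I'` (image ideal) and
`I' = {α' | i_*(α') ∈ I}`. -/
theorem stmt3 {T' T T'' : Type*} [Category T'] [Category T] [Category T'']
    [Preadditive T'] [Preadditive T] [Preadditive T'']
    (iStar : T' ⥤ T) (iUpper : T ⥤ T') (jShriek : T'' ⥤ T) (jUpper : T ⥤ T'')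
    [iStar.Additive] [iUpper.Additive] [jShriek.Additive] [jUpper.Additive]
    (e₁ : iStar ⋙ iUpper ≅ 𝟭 T') (e₂ : jShriek ⋙ jUpper ≅ 𝟭 T'')
    (h₁ : ∀ X : T', IsZero (jUpper.obj (iStar.obj X)))
    (h₂ : ∀ X : T'', IsZero (iUpper.obj (jShriek.obj X)))
    (I' : CatIdeal T') (I'' : CatIdeal T'') :
    (∀ ⦃X Y : T'⦄ (f : X ⟶ Y),
        imageMem iUpper (glueMem iUpper jUpper I' I'') f ↔ I'.mem f) ∧
    (∀ ⦃X Y : T'⦄ (f : X ⟶ Y),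
        I'.mem f ↔ glueMem iUpper jUpper I' I'' (iStar.map f)) :=
  stmt3_general iStar iUpper jUpper e₁ h₁ I' I''
end

section
/- Let (I, J) be an ideal cotorsion pair in a triangulated category T (meaning J = I^⊥ and I = ^⊥J with respect to the phantom ideal Φ of all morphisms f such that f factors as prescribed by the class of all triangles). Let j^* : T ⥤ T'' and j_! , j_* : T'' ⥤ T be triangulated functors with adjunctions (j_!, j^*) and (j^*, j_*), all compatible with shift. If j_! j^*(I) ⊆ I, then j_* j^*(J) ⊆ J. -/
open CategoryTheory Category Limits Pretriangulated

/-- The right orthogonal of `I` with respect to the phantom ideal `Φ`: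
`β : A ⟶ B` lies in `I^⊥` iff `α ≫ φ ≫ β⟦1⟧ = 0` for all `α ∈ I` and all `φ ∈ Φ`. -/
def rOrth {C : Type*} [Category C] [Preadditive C] [HasShift C ℤ]
    (Φ I : MorphismClass C) : MorphismClass C :=
  fun A B β => ∀ ⦃X Y : C⦄ (α : X ⟶ Y), I α → ∀ (φ : Y ⟶ A⟦(1 : ℤ)⟧), Φ φ →
    α ≫ φ ≫ β⟦(1 : ℤ)⟧' = 0

/-- The left orthogonal of `J` with respect to the phantom ideal `Φ`:
`α : X ⟶ Y` lies in `^⊥J` iff `α ≫ φ ≫ β⟦1⟧ = 0` for all `β ∈ J` and all `φ ∈ Φ`. -/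
def lOrth {C : Type*} [Category C] [Preadditive C] [HasShift C ℤ]
    (Φ J : MorphismClass C) : MorphismClass C :=
  fun X Y α => ∀ ⦃A B : C⦄ (β : A ⟶ B), J β → ∀ (φ : Y ⟶ A⟦(1 : ℤ)⟧), Φ φ →
    α ≫ φ ≫ β⟦(1 : ℤ)⟧' = 0

/-- The class of all morphisms. -/
def allMor (C : Type*) [Category C] : MorphismClass C := fun _ _ _ => True

/-!
Write `I ⊥ b` (`Annihilates I b`) when `α ≫ φ ≫ b = 0` for all `α ∈ I` and all `φ`,
so that `β ∈ I^⊥` means `I ⊥ β⟦1⟧`. Transposing along `F ⊣ G`, `I ⊥ G(b)` as soon as `F(I) ⊥ b`. Going through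
`j^* ⊣ j_*` and then `j_! ⊣ j^*` turns `I ⊥ j_* j^*(β⟦1⟧)` into `j_! j^*(I) ⊥ β⟦1⟧`, which holds
for `β ∈ J` because `j_! j^*(I) ⊆ I`; and `(j_* j^* β)⟦1⟧` differs from `j_* j^*(β⟦1⟧)` only by
the shift-commutation isomorphisms.
-/

def Annihilates {C : Type*} [Category C] [HasZeroMorphisms C] (I : MorphismClass C)
    {Z W : C} (b : Z ⟶ W) : Prop :=
  ∀ ⦃X Y : C⦄ (α : X ⟶ Y), I α → ∀ φ : Y ⟶ Z, α ≫ φ ≫ b = 0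

namespace Annihilates

variable {C : Type*} [Category C] [HasZeroMorphisms C] {I : MorphismClass C}

lemma precomp {V Z W : C} {b : Z ⟶ W} (hb : Annihilates I b) (c : V ⟶ Z) :
    Annihilates I (c ≫ b) := fun _ _ α hα φ => by
  simpa only [assoc] using hb α hα (φ ≫ c)

lemma postcomp {Z W V : C} {b : Z ⟶ W} (hb : Annihilates I b) (c : W ⟶ V) :
    Annihilates I (b ≫ c) := fun _ _ α hα φ => by
  rw [← assoc, ← assoc, assoc α, hb α hα φ, zero_comp]

lemma map_of_adjunction {D : Type*} [Category D] [HasZeroMorphisms D]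
    {F : C ⥤ D} {G : D ⥤ C} (adj : F ⊣ G) {Z W : D} {b : Z ⟶ W}
    (hb : ∀ ⦃X Y : C⦄ (α : X ⟶ Y), I α → ∀ φ : F.obj Y ⟶ Z, F.map α ≫ φ ≫ b = 0) :
    Annihilates I (G.map b) := fun _ _ α hα φ => by
  have := adj.isRightAdjoint
  have transpose : α ≫ φ ≫ G.map b =
      adj.homEquiv _ _ (F.map α ≫ (adj.homEquiv _ _).symm φ ≫ b) := by
    rw [adj.homEquiv_naturality_left, adj.homEquiv_naturality_right, Equiv.apply_symm_apply]
  rw [transpose, hb α hα, adj.homEquiv_unit, G.map_zero, comp_zero]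

lemma map_of_adjoint_triple {D : Type*} [Category D] [HasZeroMorphisms D]
    {L : D ⥤ C} {U : C ⥤ D} {R : D ⥤ C} (adj₁ : L ⊣ U) (adj₂ : U ⊣ R)
    (hI : ∀ ⦃X Y : C⦄ (α : X ⟶ Y), I α → I (L.map (U.map α)))
    {Z W : C} {b : Z ⟶ W} (hb : Annihilates I b) :
    Annihilates I ((U ⋙ R).map b) :=
  map_of_adjunction adj₂ fun _ _ α hα =>
    map_of_adjunction (I := fun _ _ γ => I (L.map γ)) adj₁ (fun _ _ _ hγ => hb _ hγ) _
      (hI α hα)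

lemma shift_map {F : C ⥤ C} {A : Type*} [AddMonoid A] [HasShift C A] [F.CommShift A]
    {Z W : C} {b : Z ⟶ W} (a : A) (hb : Annihilates I (F.map (b⟦a⟧'))) :
    Annihilates I ((F.map b)⟦a⟧') := by
  have conj : (F.map b)⟦a⟧' =
      (F.commShiftIso a).inv.app Z ≫ F.map (b⟦a⟧') ≫ (F.commShiftIso a).hom.app W := by
    simp
  rw [conj]
  exact (hb.postcomp _).precomp _

end Annihilates

/-- Stability transport: if `(I, J)` is an ideal cotorsion pair in `T` (with respect to
the phantom ideal of all morphisms) and `j_! j^*(I) ⊆ I`, then `j_* j^*(J) ⊆ J`. -/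
theorem stmt8 {T T'' : Type*} [Category T] [Category T'']
    [HasZeroObject T] [HasZeroObject T''] [Preadditive T] [Preadditive T'']
    [HasShift T ℤ] [HasShift T'' ℤ]
    [∀ n : ℤ, (shiftFunctor T n).Additive] [∀ n : ℤ, (shiftFunctor T'' n).Additive]
    [Pretriangulated T] [Pretriangulated T'']
    (jShriek : T'' ⥤ T) (jUpper : T ⥤ T'') (jStar : T'' ⥤ T)
    [jShriek.CommShift ℤ] [jUpper.CommShift ℤ] [jStar.CommShift ℤ]
    (adj₁ : jShriek ⊣ jUpper) (adj₂ : jUpper ⊣ jStar)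
    (I J : CatIdeal T)
    (hJ : ∀ ⦃A B : T⦄ (β : A ⟶ B), J.mem β ↔ rOrth (allMor T) I.mem β)
    (hI : ∀ ⦃X Y : T⦄ (α : X ⟶ Y), I.mem α ↔ lOrth (allMor T) J.mem α)
    (hstab : ∀ ⦃X Y : T⦄ (f : X ⟶ Y), imageMem (jUpper ⋙ jShriek) I.mem f → I.mem f) :
    ∀ ⦃X Y : T⦄ (f : X ⟶ Y), imageMem (jUpper ⋙ jStar) J.mem f → J.mem f := by
  rintro _ _ _ ⟨A, B, β, g, h, hβ, rfl⟩
  have hβ_shift : Annihilates I.mem (β⟦(1 : ℤ)⟧') :=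
    fun _ _ α hα φ => (hJ β).mp hβ α hα φ trivial
  have hI_stable : ∀ ⦃X Y : T⦄ (α : X ⟶ Y), I.mem α → I.mem (jShriek.map (jUpper.map α)) :=
    fun _ _ α hα => hstab _ ⟨_, _, α, 𝟙 _, 𝟙 _, hα, by simp⟩
  have key := (((hβ_shift.map_of_adjoint_triple adj₁ adj₂ hI_stable).shift_map
    (F := jUpper ⋙ jStar) 1).precomp (g⟦(1 : ℤ)⟧')).postcomp (h⟦(1 : ℤ)⟧')
  refine (hJ _).mpr fun _ _ α hα φ _ => ?_
  simpa only [Functor.map_comp, assoc] using key α hα φ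
end

section
/- Let (I, J) be an ideal cotorsion pair in a triangulated category T, and let j^* : T ⥤ T'', j_! , j_* : T'' ⥤ T be triangulated functors with adjunctions (j_!, j^*), (j^*, j_*) commuting with shifts, such that j_! j^*(I) ⊆ I. Then the image ideals j^*(I) and j^*(J) are orthogonal in T'': for every α'' ∈ j^*(I), every phantom φ'' in T'', and every β'' ∈ j^*(J), the composite β''[1] ∘ φ'' ∘ α'' vanishes, where the phantom ideal of T'' is taken to be all of the relevant obstruction morphisms (class of all triangles). -/
open CategoryTheory Category Limits Pretriangulated

/-!
Write `α'' = g ≫ j^*α ≫ h` and `β'' = g' ≫ j^*β ≫ h'`. Commuting the shift past `j^*`, the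
composite factors through `j^*α ≫ ψ ≫ j^*(β⟦1⟧)` for some `ψ`. Under `j_! ⊣ j^*` this vanishes
iff its transpose `j_! j^*α ≫ ψ^♭ ≫ β⟦1⟧` does, and that holds because `j_! j^*α ∈ I = ^⊥J`.
-/

theorem CategoryTheory.Adjunction.homEquiv_symm_eq_zero_iff {C D : Type*} [Category C]
    [Category D] [HasZeroMorphisms C] [HasZeroMorphisms D] {F : C ⥤ D} {G : D ⥤ C}
    (adj : F ⊣ G) {X : C} {Y : D} (f : X ⟶ G.obj Y) :
    (adj.homEquiv X Y).symm f = 0 ↔ f = 0 := by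
  have := adj.isRightAdjoint
  rw [← (adj.homEquiv X Y).injective.eq_iff, Equiv.apply_symm_apply, Adjunction.homEquiv_unit,
    Functor.map_zero, comp_zero]

theorem CategoryTheory.Adjunction.comp_comp_map_eq_zero_iff {C D : Type*} [Category C]
    [Category D] [HasZeroMorphisms C] [HasZeroMorphisms D] {F : C ⥤ D} {G : D ⥤ C}
    (adj : F ⊣ G) {W X : C} {Y Z : D} (u : W ⟶ X) (ψ : X ⟶ G.obj Y) (v : Y ⟶ Z) :
    u ≫ ψ ≫ G.map v = 0 ↔ F.map u ≫ (adj.homEquiv X Y).symm ψ ≫ v = 0 := by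
  rw [← adj.homEquiv_symm_eq_zero_iff, Adjunction.homEquiv_naturality_left_symm,
    Adjunction.homEquiv_naturality_right_symm]

theorem CategoryTheory.Functor.shift_map_eq {C D A : Type*} [Category C] [Category D]
    [AddMonoid A] [HasShift C A] [HasShift D A] (G : C ⥤ D) [G.CommShift A]
    {X Y : C} (f : X ⟶ Y) (a : A) :
    (G.map f)⟦a⟧' =
      (G.commShiftIso a).inv.app X ≫ G.map (f⟦a⟧') ≫ (G.commShiftIso a).hom.app Y := by
  simp

theorem imageMem_map {C D : Type*} [Category C] [Category D] (F : C ⥤ D)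
    {I : MorphismClass C} {X Y : C} {α : X ⟶ Y} (hα : I α) : imageMem F I (F.map α) :=
  ⟨X, Y, α, 𝟙 _, 𝟙 _, hα, by simp⟩

theorem map_comp_comp_map_shift_eq_zero {T T'' : Type*} [Category T] [Category T'']
    [Preadditive T] [HasZeroMorphisms T''] [HasShift T ℤ] {L : T'' ⥤ T} {R : T ⥤ T''}
    (adj : L ⊣ R) {I J : MorphismClass T}
    (hI : ∀ ⦃X Y : T⦄ (α : X ⟶ Y), I α → lOrth (allMor T) J α)
    (hstab : ∀ ⦃X Y : T⦄ (α : X ⟶ Y), I α → I (L.map (R.map α)))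
    {X Y A B : T} {α : X ⟶ Y} (hα : I α) {β : A ⟶ B} (hβ : J β)
    (ψ : R.obj Y ⟶ R.obj (A⟦(1 : ℤ)⟧)) :
    R.map α ≫ ψ ≫ R.map (β⟦(1 : ℤ)⟧') = 0 :=
  (adj.comp_comp_map_eq_zero_iff _ _ _).2 (hI _ (hstab _ hα) β hβ _ trivial)

/-- Orthogonality transport: if `(I, J)` is an ideal cotorsion pair in `T` with
`j_! j^*(I) ⊆ I`, then the image ideals `j^*(I)` and `j^*(J)` are orthogonal in `T''`
(phantom ideal = all morphisms). -/
theorem stmt9 {T T'' : Type*} [Category T] [Category T'']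
    [HasZeroObject T] [HasZeroObject T''] [Preadditive T] [Preadditive T'']
    [HasShift T ℤ] [HasShift T'' ℤ]
    [∀ n : ℤ, (shiftFunctor T n).Additive] [∀ n : ℤ, (shiftFunctor T'' n).Additive]
    [Pretriangulated T] [Pretriangulated T'']
    (jShriek : T'' ⥤ T) (jUpper : T ⥤ T'') (jStar : T'' ⥤ T)
    [jShriek.CommShift ℤ] [jUpper.CommShift ℤ] [jStar.CommShift ℤ]
    (adj₁ : jShriek ⊣ jUpper) (adj₂ : jUpper ⊣ jStar)
    (I J : CatIdeal T)
    (hJ : ∀ ⦃A B : T⦄ (β : A ⟶ B), J.mem β ↔ rOrth (allMor T) I.mem β)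
    (hI : ∀ ⦃X Y : T⦄ (α : X ⟶ Y), I.mem α ↔ lOrth (allMor T) J.mem α)
    (hstab : ∀ ⦃X Y : T⦄ (f : X ⟶ Y), imageMem (jUpper ⋙ jShriek) I.mem f → I.mem f) :
    ∀ ⦃X Y : T''⦄ (α'' : X ⟶ Y), imageMem jUpper I.mem α'' →
      ∀ ⦃A B : T''⦄ (β'' : A ⟶ B), imageMem jUpper J.mem β'' →
        ∀ (φ'' : Y ⟶ A⟦(1 : ℤ)⟧), α'' ≫ φ'' ≫ β''⟦(1 : ℤ)⟧' = 0 := by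
  rintro X Y _ ⟨X₀, Y₀, α, g, h, hα, rfl⟩ A B _ ⟨A₀, B₀, β, g', h', hβ, rfl⟩ φ''
  have hαβ := map_comp_comp_map_shift_eq_zero adj₁ (fun _ _ α ↦ (hI α).1)
    (fun _ _ α hα ↦ hstab _ (imageMem_map (jUpper ⋙ jShriek) hα)) hα hβ
    (h ≫ φ'' ≫ g'⟦(1 : ℤ)⟧' ≫ (jUpper.commShiftIso (1 : ℤ)).inv.app A₀)
  simp only [Functor.map_comp, assoc] at hαβ ⊢
  rw [jUpper.shift_map_eq]
  simp only [assoc]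
  rw [reassoc_of% hαβ, zero_comp, comp_zero]
end

section
/- In a recollement (T', T, T'') of triangulated categories, let I' be an ideal of T'. Then the right orthogonal of the image ideal satisfies (i_* I')^⊥ = { β a morphism of T | i^!(β) ∈ (I')^⊥ }, where orthogonals are taken with respect to the phantom ideals of the class of all triangles in T and T' respectively, and i^! preserves phantoms (i^!(Φ_T) ⊆ Φ_{T'}) while i_* preserves phantoms (i_*(Φ_{T'}) ⊆ Φ_T). -/
open CategoryTheory Category Limits Pretriangulated

noncomputable section AuxCanShift

variable {T' T : Type*} [Category T'] [Category T]
  [HasShift T' ℤ] [HasShift T ℤ]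
  (iStar : T' ⥤ T) (iShriek : T ⥤ T') (adj : iStar ⊣ iShriek) [iStar.CommShift ℤ]

/-- canonical comparison map `(i^! A)⟦1⟧ ⟶ i^!(A⟦1⟧)`. -/
def canShift (A : T) : (iShriek.obj A)⟦(1:ℤ)⟧ ⟶ iShriek.obj (A⟦(1:ℤ)⟧) :=
  (adj.homEquiv _ _) ((iStar.commShiftIso (1:ℤ)).hom.app (iShriek.obj A) ≫
    (adj.counit.app A)⟦(1:ℤ)⟧')

lemma comp_canShift {X' : T'} {A : T} (g : X' ⟶ (iShriek.obj A)⟦(1:ℤ)⟧) :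
    g ≫ canShift iStar iShriek adj A =
      (adj.homEquiv _ _) (iStar.map g ≫ (iStar.commShiftIso (1:ℤ)).hom.app (iShriek.obj A) ≫
        (adj.counit.app A)⟦(1:ℤ)⟧') := by
  rw [canShift, Adjunction.homEquiv_naturality_left]
  rfl

lemma canShift_natural {A B : T} (β : A ⟶ B) :
    (iShriek.map β)⟦(1:ℤ)⟧' ≫ canShift iStar iShriek adj B =
      canShift iStar iShriek adj A ≫ iShriek.map (β⟦(1:ℤ)⟧') := by
  rw [comp_canShift, canShift, ← Adjunction.homEquiv_naturality_right]
  congr 1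
  rw [Functor.commShiftIso_hom_naturality_assoc]
  simp only [Functor.comp_obj, assoc, ← Functor.map_comp]
  congr 2
  simp [adj.counit.naturality β]

lemma dagger (X' : T') (h1 : (-1:ℤ) + 1 = 0) :
    iStar.map ((shiftFunctorCompIsoId T' (-1:ℤ) 1 h1).inv.app X') ≫
      (iStar.commShiftIso (1:ℤ)).hom.app (X'⟦(-1:ℤ)⟧) =
    (shiftFunctorCompIsoId T (-1:ℤ) 1 h1).inv.app (iStar.obj X') ≫
      ((iStar.commShiftIso (-1:ℤ)).inv.app X')⟦(1:ℤ)⟧' := by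
  rw [Functor.map_shiftFunctorCompIsoId_inv_app]
  simp

instance canShift_isIso (A : T) : IsIso (canShift iStar iShriek adj A) := by
  apply isIso_of_yoneda_map_bijective
  intro X'
  have h1 : ((-1 : ℤ) + 1 = 0) := by omega
  let adjT' := (shiftEquiv' T' (-1 : ℤ) (1:ℤ) h1).toAdjunction
  let adjT := (shiftEquiv' T (-1 : ℤ) (1:ℤ) h1).toAdjunction
  let E : (X' ⟶ (iShriek.obj A)⟦(1:ℤ)⟧) ≃ (X' ⟶ iShriek.obj (A⟦(1:ℤ)⟧)) :=
    ((adjT'.homEquiv X' (iShriek.obj A)).symm.trans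
      ((adj.homEquiv (X'⟦(-1:ℤ)⟧) A).symm.trans
        ((Iso.homCongr (((iStar.commShiftIso (-1:ℤ)).app X')) (Iso.refl A)).trans
          ((adjT.homEquiv (iStar.obj X') A).trans
            (adj.homEquiv X' (A⟦(1:ℤ)⟧)))))) 
  have key : ∀ g : X' ⟶ (iShriek.obj A)⟦(1:ℤ)⟧, g ≫ canShift iStar iShriek adj A = E g := by
    intro g
    obtain ⟨u, rfl⟩ : ∃ u, g = (adjT'.homEquiv X' (iShriek.obj A)) u :=
      ⟨_, ((adjT'.homEquiv _ _).apply_symm_apply g).symm⟩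
    erw [comp_canShift]
    show _ = (adj.homEquiv X' (A⟦(1:ℤ)⟧)) _
    congr 1
    rw [Equiv.symm_apply_apply]
    erw [Adjunction.homEquiv_unit, Adjunction.homEquiv_unit, Adjunction.homEquiv_counit,
      Iso.homCongr_apply]
    simp only [adjT', adjT, Equivalence.toAdjunction_unit, shiftEquiv'_unitIso, Iso.symm_hom,
      shiftEquiv'_inverse, shiftEquiv'_functor, Iso.refl_hom, comp_id, Iso.app_inv,
      Functor.comp_obj, Functor.id_obj, Functor.map_comp, assoc, Iso.homCongr_apply,
      Equivalence.unit]
    show iStar.map ((shiftFunctorCompIsoId T' (-1) 1 h1).inv.app X' ≫ u⟦(1:ℤ)⟧') ≫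
      (iStar.commShiftIso (1:ℤ)).hom.app (iShriek.obj A) ≫ (adj.counit.app A)⟦(1:ℤ)⟧' =
      (shiftFunctorCompIsoId T (-1) 1 h1).inv.app (iStar.obj X') ≫
      ((iStar.commShiftIso (-1:ℤ)).inv.app X' ≫ iStar.map u ≫ adj.counit.app A)⟦(1:ℤ)⟧'
    simp only [Functor.map_comp, assoc]
    erw [Functor.commShiftIso_hom_naturality_assoc]
    simp
  have : (fun (g : X' ⟶ (iShriek.obj A)⟦(1:ℤ)⟧) => g ≫ canShift iStar iShriek adj A) = E := by
    funext g; exact key g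
  rw [this]
  exact E.bijective

end AuxCanShift


/-- In a recollement, `(i_* I')^⊥ = {β | i^!(β) ∈ (I')^⊥}`, where orthogonals are
taken with respect to phantom ideals `Φ`, `Φ'` preserved by `i^!` and `i_*`. -/
theorem stmt10
    {T' T T'' : Type*} [Category T'] [Category T] [Category T'']
    [HasZeroObject T'] [HasZeroObject T] [HasZeroObject T'']
    [Preadditive T'] [Preadditive T] [Preadditive T'']
    [HasShift T' ℤ] [HasShift T ℤ] [HasShift T'' ℤ]
    [∀ n : ℤ, (shiftFunctor T' n).Additive] [∀ n : ℤ, (shiftFunctor T n).Additive]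
    [∀ n : ℤ, (shiftFunctor T'' n).Additive]
    [Pretriangulated T'] [Pretriangulated T] [Pretriangulated T'']
    (iStar : T' ⥤ T) (iUpper : T ⥤ T') (iShriek : T ⥤ T')
    (jShriek : T'' ⥤ T) (jUpper : T ⥤ T'') (jStar : T'' ⥤ T)
    (adj₁ : iUpper ⊣ iStar) (adj₂ : iStar ⊣ iShriek)
    (adj₃ : jShriek ⊣ jUpper) (adj₄ : jUpper ⊣ jStar)
    (hiFF : iStar.FullyFaithful) (hj₁FF : jShriek.FullyFaithful)
    (hj₂FF : jStar.FullyFaithful)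
    (hz : ∀ X : T', IsZero (jUpper.obj (iStar.obj X)))
    (htri₁ : ∀ X : T,
      ∃ δ : iStar.obj (iUpper.obj X) ⟶ (jShriek.obj (jUpper.obj X))⟦(1 : ℤ)⟧,
        Triangle.mk (adj₃.counit.app X) (adj₁.unit.app X) δ ∈ distTriang T)
    (htri₂ : ∀ X : T,
      ∃ δ : jStar.obj (jUpper.obj X) ⟶ (iStar.obj (iShriek.obj X))⟦(1 : ℤ)⟧,
        Triangle.mk (adj₂.counit.app X) (adj₄.unit.app X) δ ∈ distTriang T)
    [iStar.CommShift ℤ] [iShriek.CommShift ℤ]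
    (I' : CatIdeal T') (Φ : CatIdeal T) (Φ' : CatIdeal T')
    (hΦ₁ : ∀ ⦃X Y : T⦄ (f : X ⟶ Y), Φ.mem f → Φ'.mem (iShriek.map f))
    (hΦ₂ : ∀ ⦃X Y : T'⦄ (f : X ⟶ Y), Φ'.mem f → Φ.mem (iStar.map f)) :
    ∀ ⦃A B : T⦄ (β : A ⟶ B),
      rOrth Φ.mem (imageMem iStar I'.mem) β ↔ rOrth Φ'.mem I'.mem (iShriek.map β) := by
  have hra : iShriek.IsRightAdjoint := adj₂.isRightAdjoint
  intro A B β
  constructor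
  · intro h X' Y' α' hα' φ' hφ'
    have hiso : IsIso (canShift iStar iShriek adj₂ B) := canShift_isIso _ _ _ _
    rw [← cancel_mono (canShift iStar iShriek adj₂ B), zero_comp]
    simp only [assoc]
    rw [canShift_natural]
    have e1 : α' ≫ φ' ≫ canShift iStar iShriek adj₂ A ≫ iShriek.map (β⟦(1:ℤ)⟧')
        = (adj₂.homEquiv _ _) ((iStar.map (α' ≫ φ') ≫
            (iStar.commShiftIso (1:ℤ)).hom.app (iShriek.obj A) ≫
            (adj₂.counit.app A)⟦(1:ℤ)⟧') ≫ β⟦(1:ℤ)⟧') := by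
      rw [Adjunction.homEquiv_naturality_right, ← comp_canShift]
      simp only [assoc]
    rw [e1]
    have hφ : Φ.mem (iStar.map φ' ≫ (iStar.commShiftIso (1:ℤ)).hom.app (iShriek.obj A) ≫
        (adj₂.counit.app A)⟦(1:ℤ)⟧') := by
      simpa using Φ.comp_mem (𝟙 _) ((iStar.commShiftIso (1:ℤ)).hom.app (iShriek.obj A) ≫
        (adj₂.counit.app A)⟦(1:ℤ)⟧') (hΦ₂ φ' hφ')
    have hα : imageMem iStar I'.mem (iStar.map α') :=
      ⟨X', Y', α', 𝟙 _, 𝟙 _, hα', by simp⟩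
    have h2 := h (iStar.map α') hα _ hφ
    have e2 : (iStar.map (α' ≫ φ') ≫
        (iStar.commShiftIso (1:ℤ)).hom.app (iShriek.obj A) ≫
        (adj₂.counit.app A)⟦(1:ℤ)⟧') ≫ β⟦(1:ℤ)⟧' = 0 := by
      simp only [Functor.map_comp, assoc] at h2 ⊢
      exact h2
    rw [e2, Adjunction.homEquiv_unit]
    simp
  · intro h X Y α hα φ hφ
    obtain ⟨X', Y', α', g, k, hα', rfl⟩ := hα
    suffices hkey : iStar.map α' ≫ (k ≫ φ) ≫ β⟦(1:ℤ)⟧' = 0 by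
      have e : (g ≫ iStar.map α' ≫ k) ≫ φ ≫ β⟦(1:ℤ)⟧'
          = g ≫ (iStar.map α' ≫ (k ≫ φ) ≫ β⟦(1:ℤ)⟧') := by simp only [assoc]
      rw [e, hkey, comp_zero]
    have hψ : Φ.mem (k ≫ φ) := by simpa using Φ.comp_mem k (𝟙 _) hφ
    have hiso : IsIso (canShift iStar iShriek adj₂ A) := canShift_isIso _ _ _ _
    set c := canShift iStar iShriek adj₂ A with hc
    set φ'' := (adj₂.homEquiv _ _) (k ≫ φ) ≫ inv c with hφ''def
    have hφ'' : Φ'.mem φ'' := by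
      have := Φ'.comp_mem (adj₂.unit.app Y') (inv c) (hΦ₁ (k ≫ φ) hψ)
      simpa [hφ''def, Adjunction.homEquiv_unit] using this
    have h1 := h α' hα' φ'' hφ''
    have h0 : (adj₂.homEquiv _ _) (iStar.map α' ≫ (k ≫ φ) ≫ β⟦(1:ℤ)⟧') = 0 := by
      rw [Adjunction.homEquiv_naturality_left, Adjunction.homEquiv_naturality_right]
      have e3 : (adj₂.homEquiv _ _) (k ≫ φ) = φ'' ≫ c := by
        rw [hφ''def, assoc, IsIso.inv_hom_id, comp_id]
      rw [e3, assoc, ← canShift_natural]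
      have e4 : α' ≫ φ'' ≫ (iShriek.map β)⟦(1:ℤ)⟧' ≫ canShift iStar iShriek adj₂ B
          = (α' ≫ φ'' ≫ (iShriek.map β)⟦(1:ℤ)⟧') ≫ canShift iStar iShriek adj₂ B := by
        simp only [assoc]
      rw [e4, h1, zero_comp]
    have hz0 : (adj₂.homEquiv _ _) (0 : iStar.obj X' ⟶ B⟦(1:ℤ)⟧) = 0 := by
      rw [Adjunction.homEquiv_unit]
      simp
    exact (adj₂.homEquiv _ _).injective (h0.trans hz0.symm)
end

section
/- In a recollement (T', T, T''), let J'' be an ideal of T''. Then ^⊥(j_* J'') = { α a morphism of T | j^*(α) ∈ ^⊥J'' }, where left orthogonals are taken with respect to phantom ideals of the class of all triangles, assuming j^* preserves phantoms and j_* preserves phantoms. -/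
open CategoryTheory Category Limits Pretriangulated

/-!
Transposing along the adjunction `j^* ⊣ j_*` and moving the shift through `j_*` turns the
composite `j^*(α) ≫ φ ≫ β⟦1⟧` into `α ≫ φ^♯ ≫ (j_* β)⟦1⟧` (up to an isomorphism), and one
vanishes iff the other does. Since `j^*` and `j_*` preserve phantoms, `φ ↦ φ^♯` matches the
phantoms of `T''` out of `j^* Y` with those of `T` out of `Y`. Finally, because phantoms form
an ideal, orthogonality to the image ideal `j_* J''` only has to be tested on the generators
`j_* β`, `β ∈ J''`.
-/

lemma CatIdeal.comp_mem_right {C : Type*} [Category C] [Preadditive C] (I : CatIdeal C)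
    {X Y Z : C} {f : X ⟶ Y} (k : Y ⟶ Z) (hf : I.mem f) : I.mem (f ≫ k) := by
  simpa using I.comp_mem (𝟙 X) k hf

lemma lOrth_imageMem_iff {C D : Type*} [Category C] [Category D] [Preadditive C]
    [HasShift C ℤ] (Φ : CatIdeal C) (F : D ⥤ C)
    (I : MorphismClass D) {X Y : C} (α : X ⟶ Y) :
    lOrth Φ.mem (imageMem F I) α ↔ ∀ ⦃A B : D⦄ (β : A ⟶ B), I β →
      ∀ φ : Y ⟶ (F.obj A)⟦(1 : ℤ)⟧, Φ.mem φ → α ≫ φ ≫ (F.map β)⟦(1 : ℤ)⟧' = 0 := by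
  constructor
  · intro h A B β hβ φ hφ
    exact h (F.map β) ⟨A, B, β, 𝟙 _, 𝟙 _, hβ, by simp⟩ φ hφ
  · rintro h _ _ _ ⟨A, B, β, g, k, hβ, rfl⟩ φ hφ
    have hgen := h β hβ (φ ≫ g⟦(1 : ℤ)⟧') (Φ.comp_mem_right _ hφ)
    simp only [Functor.map_comp, assoc] at hgen ⊢
    rw [reassoc_of% hgen, zero_comp]

namespace CategoryTheory.Adjunction

variable {C D : Type*} [Category C] [Category D] {L : C ⥤ D} {R : D ⥤ C} (adj : L ⊣ R)

lemma homEquiv_eq_zero_iff [HasZeroMorphisms C] [HasZeroMorphisms D] {X : C} {Y : D}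
    (f : L.obj X ⟶ Y) : adj.homEquiv X Y f = 0 ↔ f = 0 := by
  have : R.IsRightAdjoint := adj.isRightAdjoint
  refine (adj.homEquiv X Y).injective.eq_iff' ?_
  rw [homEquiv_unit, Functor.map_zero, comp_zero]

lemma map_comp_comp_shift_eq_zero_iff [Preadditive C] [Preadditive D] [HasShift C ℤ]
    [HasShift D ℤ] [R.CommShift ℤ] (n : ℤ) {X Y : C} {A B : D} (α : X ⟶ Y)
    (φ : L.obj Y ⟶ A⟦n⟧) (β : A ⟶ B) :
    L.map α ≫ φ ≫ β⟦n⟧' = 0 ↔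
      α ≫ (adj.homEquiv _ _ φ ≫ (R.commShiftIso n).hom.app A) ≫ (R.map β)⟦n⟧' = 0 := by
  have hshift : R.map (β⟦n⟧') =
      (R.commShiftIso n).hom.app A ≫ (R.map β)⟦n⟧' ≫ (R.commShiftIso n).inv.app B := by
    simp
  rw [← adj.homEquiv_eq_zero_iff, homEquiv_naturality_left, homEquiv_naturality_right, hshift]
  simp only [← assoc]
  exact Preadditive.IsIso.comp_right_eq_zero _ _

end CategoryTheory.Adjunction

lemma lOrth_imageMem_iff_lOrth_map {C D : Type*} [Category C] [Category D] [Preadditive C]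
    [Preadditive D] [HasShift C ℤ] [HasShift D ℤ] {L : C ⥤ D} {R : D ⥤ C} (adj : L ⊣ R)
    [R.CommShift ℤ] (J : MorphismClass D) (Φ : CatIdeal C) (Φ' : CatIdeal D)
    (hL : ∀ ⦃X Y : C⦄ (f : X ⟶ Y), Φ.mem f → Φ'.mem (L.map f))
    (hR : ∀ ⦃X Y : D⦄ (f : X ⟶ Y), Φ'.mem f → Φ.mem (R.map f)) {X Y : C} (α : X ⟶ Y) :
    lOrth Φ.mem (imageMem R J) α ↔ lOrth Φ'.mem J (L.map α) := by
  rw [lOrth_imageMem_iff]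
  constructor
  · intro h A B β hβ φ hφ
    rw [adj.map_comp_comp_shift_eq_zero_iff]
    refine h β hβ _ ?_
    rw [adj.homEquiv_unit, assoc]
    exact Φ.comp_mem _ _ (hR φ hφ)
  · intro h A B β hβ ψ hψ
    set φ := (adj.homEquiv _ _).symm (ψ ≫ (R.commShiftIso (1 : ℤ)).inv.app A) with hφ_def
    have hφ : Φ'.mem φ := by
      rw [hφ_def, adj.homEquiv_counit]
      exact Φ'.comp_mem_right _ (hL _ (Φ.comp_mem_right _ hψ))
    have h₀ := h β hβ φ hφ
    rw [adj.map_comp_comp_shift_eq_zero_iff, Equiv.apply_symm_apply] at h₀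
    simpa only [assoc, Iso.inv_hom_id_app_assoc] using h₀

/-- In a recollement, `^⊥(j_* J'') = {α | j^*(α) ∈ ^⊥J''}`, where left orthogonals are
taken with respect to phantom ideals `Φ`, `Φ''` preserved by `j^*` and `j_*`. -/
theorem stmt11
    {T' T T'' : Type*} [Category T'] [Category T] [Category T'']
    [HasZeroObject T'] [HasZeroObject T] [HasZeroObject T'']
    [Preadditive T'] [Preadditive T] [Preadditive T'']
    [HasShift T' ℤ] [HasShift T ℤ] [HasShift T'' ℤ]
    [∀ n : ℤ, (shiftFunctor T' n).Additive] [∀ n : ℤ, (shiftFunctor T n).Additive]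
    [∀ n : ℤ, (shiftFunctor T'' n).Additive]
    [Pretriangulated T'] [Pretriangulated T] [Pretriangulated T'']
    (iStar : T' ⥤ T) (iUpper : T ⥤ T') (iShriek : T ⥤ T')
    (jShriek : T'' ⥤ T) (jUpper : T ⥤ T'') (jStar : T'' ⥤ T)
    (adj₁ : iUpper ⊣ iStar) (adj₂ : iStar ⊣ iShriek)
    (adj₃ : jShriek ⊣ jUpper) (adj₄ : jUpper ⊣ jStar)
    (hiFF : iStar.FullyFaithful) (hj₁FF : jShriek.FullyFaithful)
    (hj₂FF : jStar.FullyFaithful)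
    (hz : ∀ X : T', IsZero (jUpper.obj (iStar.obj X)))
    (htri₁ : ∀ X : T,
      ∃ δ : iStar.obj (iUpper.obj X) ⟶ (jShriek.obj (jUpper.obj X))⟦(1 : ℤ)⟧,
        Triangle.mk (adj₃.counit.app X) (adj₁.unit.app X) δ ∈ distTriang T)
    (htri₂ : ∀ X : T,
      ∃ δ : jStar.obj (jUpper.obj X) ⟶ (iStar.obj (iShriek.obj X))⟦(1 : ℤ)⟧,
        Triangle.mk (adj₂.counit.app X) (adj₄.unit.app X) δ ∈ distTriang T)
    [jUpper.CommShift ℤ] [jStar.CommShift ℤ]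
    (J'' : CatIdeal T'') (Φ : CatIdeal T) (Φ'' : CatIdeal T'')
    (hΦ₁ : ∀ ⦃X Y : T⦄ (f : X ⟶ Y), Φ.mem f → Φ''.mem (jUpper.map f))
    (hΦ₂ : ∀ ⦃X Y : T''⦄ (f : X ⟶ Y), Φ''.mem f → Φ.mem (jStar.map f)) :
    ∀ ⦃X Y : T⦄ (α : X ⟶ Y),
      lOrth Φ.mem (imageMem jStar J''.mem) α ↔ lOrth Φ''.mem J''.mem (jUpper.map α) :=
  fun _ _ α => lOrth_imageMem_iff_lOrth_map adj₄ J''.mem Φ Φ'' hΦ₁ hΦ₂ α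
end

section
/- In a recollement (T', T, T''), let I' be an ideal of T' and let T''→ denote the ideal of all morphisms of T''. Then the Toda bracket ⟨i_* I', j_* (T''→)⟩ equals { ξ a morphism of T | i^!(ξ) ∈ I' }. Here ⟨A, B⟩ is the ideal of all morphisms ξ : F → K such that there exist a distinguished triangle X → C → Y → X[1] and morphisms ξ' : F → C, ξ'' : C → K with ξ = ξ'' ∘ ξ', the composite F → C → Y lying in B, and the composite X → C → K lying in A. -/
open CategoryTheory Category Limits Pretriangulated

/-- The Toda bracket `⟨A, B⟩` of two morphism classes: all `ξ = ξ' ≫ ξ''` factoring through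
the middle term of a distinguished triangle `X → C → Y → X⟦1⟧` with `ξ' ≫ b ∈ B` and
`a ≫ ξ'' ∈ A`. -/
def toda {C : Type*} [Category C] [HasZeroObject C] [Preadditive C] [HasShift C ℤ]
    [∀ n : ℤ, (shiftFunctor C n).Additive] [Pretriangulated C]
    (A B : MorphismClass C) : MorphismClass C :=
  fun F K ξ => ∃ (X M Y : C) (a : X ⟶ M) (b : M ⟶ Y) (h : Y ⟶ X⟦(1 : ℤ)⟧)
    (ξ' : F ⟶ M) (ξ'' : M ⟶ K),
    Triangle.mk a b h ∈ (distTriang C) ∧ ξ = ξ' ≫ ξ'' ∧ B (ξ' ≫ b) ∧ A (a ≫ ξ'')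

/-- In a recollement, `⟨i_* I', j_* (T''→)⟩ = {ξ | i^!(ξ) ∈ I'}`. -/
theorem stmt12
    {T' T T'' : Type*} [Category T'] [Category T] [Category T'']
    [HasZeroObject T'] [HasZeroObject T] [HasZeroObject T'']
    [Preadditive T'] [Preadditive T] [Preadditive T'']
    [HasShift T' ℤ] [HasShift T ℤ] [HasShift T'' ℤ]
    [∀ n : ℤ, (shiftFunctor T' n).Additive] [∀ n : ℤ, (shiftFunctor T n).Additive]
    [∀ n : ℤ, (shiftFunctor T'' n).Additive]
    [Pretriangulated T'] [Pretriangulated T] [Pretriangulated T'']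
    (iStar : T' ⥤ T) (iUpper : T ⥤ T') (iShriek : T ⥤ T')
    (jShriek : T'' ⥤ T) (jUpper : T ⥤ T'') (jStar : T'' ⥤ T)
    (adj₁ : iUpper ⊣ iStar) (adj₂ : iStar ⊣ iShriek)
    (adj₃ : jShriek ⊣ jUpper) (adj₄ : jUpper ⊣ jStar)
    (hiFF : iStar.FullyFaithful) (hj₁FF : jShriek.FullyFaithful)
    (hj₂FF : jStar.FullyFaithful)
    (hz : ∀ X : T', IsZero (jUpper.obj (iStar.obj X)))
    (htri₁ : ∀ X : T,
      ∃ δ : iStar.obj (iUpper.obj X) ⟶ (jShriek.obj (jUpper.obj X))⟦(1 : ℤ)⟧,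
        Triangle.mk (adj₃.counit.app X) (adj₁.unit.app X) δ ∈ distTriang T)
    (htri₂ : ∀ X : T,
      ∃ δ : jStar.obj (jUpper.obj X) ⟶ (iStar.obj (iShriek.obj X))⟦(1 : ℤ)⟧,
        Triangle.mk (adj₂.counit.app X) (adj₄.unit.app X) δ ∈ distTriang T)
    (I' : CatIdeal T') :
    ∀ ⦃F K : T⦄ (ξ : F ⟶ K),
      toda (imageMem iStar I'.mem) (imageMem jStar (allMor T'')) ξ ↔
        I'.mem (iShriek.map ξ) := by
  haveI := hiFF.full
  haveI := hiFF.faithful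
  -- `jStar` of `jUpper (iStar A)` is a zero object
  have hzstar : ∀ A : T', IsZero (jStar.obj (jUpper.obj (iStar.obj A))) := by
    intro A
    rw [IsZero.iff_id_eq_zero]
    set Z := jUpper.obj (iStar.obj A)
    have h1 : hj₂FF.preimage (0 : jStar.obj Z ⟶ jStar.obj Z) = 𝟙 Z :=
      (hz A).eq_of_src _ _
    rw [← jStar.map_id, ← h1, hj₂FF.map_preimage]
  -- every map `iStar A ⟶ jStar B` is zero
  have hvan : ∀ (A : T') (B : T'') (f : iStar.obj A ⟶ jStar.obj B), f = 0 := by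
    intro A B f
    have hf : f = adj₄.unit.app (iStar.obj A) ≫
        jStar.map ((adj₄.homEquiv _ _).symm f) := by
      conv_lhs => rw [← (adj₄.homEquiv _ _).apply_symm_apply f]
      rw [Adjunction.homEquiv_unit]
    have hu : adj₄.unit.app (iStar.obj A) = 0 := (hzstar A).eq_of_tgt _ _
    rw [hf, hu, zero_comp]
  intro F K ξ
  constructor
  · rintro ⟨X, M, Y, a, b, h, ξ', ξ'', hdist, rfl,
      ⟨X'', Y'', α, g, hmap, -, hfac⟩, ⟨X', Y', α', g', h', hα', hfac'⟩⟩
    -- the composite `i_* i^! F ⟶ F ⟶ M ⟶ Y` vanishes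
    have h0 : (adj₂.counit.app F ≫ ξ') ≫ b = 0 := by
      rw [assoc, hfac, ← assoc]
      rw [hvan _ _ (adj₂.counit.app F ≫ g)]
      simp
    obtain ⟨lam, hlam⟩ : ∃ lam : iStar.obj (iShriek.obj F) ⟶ X,
        adj₂.counit.app F ≫ ξ' = lam ≫ a := Pretriangulated.Triangle.coyoneda_exact₂ _ hdist
      (adj₂.counit.app F ≫ ξ') h0
    -- express `i^! ξ` using the unit of `adj₂` (which is iso since `iStar` is f.f.)
    have hmapmap : ∀ {U V : T'} (w : U ⟶ V),
        iShriek.map (iStar.map w) =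
          inv (adj₂.unit.app U) ≫ w ≫ adj₂.unit.app V := by
      intro U V w
      rw [IsIso.eq_inv_comp]
      simpa using (adj₂.unit.naturality w).symm
    have key : iShriek.map (ξ' ≫ ξ'') =
        (adj₂.unit.app (iShriek.obj F) ≫ iShriek.map (lam ≫ g') ≫
          inv (adj₂.unit.app X')) ≫ α' ≫
            (adj₂.unit.app Y' ≫ iShriek.map h') := by
      have h1 : iShriek.map (ξ' ≫ ξ'') =
          adj₂.unit.app (iShriek.obj F) ≫
            iShriek.map (adj₂.counit.app F ≫ ξ' ≫ ξ'') := by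
        rw [iShriek.map_comp (adj₂.counit.app F), ← assoc,
          adj₂.right_triangle_components]
        exact (id_comp _).symm
      have hlam' : adj₂.counit.app F ≫ ξ' = lam ≫ a := hlam
      have h2 : adj₂.counit.app F ≫ ξ' ≫ ξ'' =
          (lam ≫ g') ≫ iStar.map α' ≫ h' := by
        rw [← assoc, hlam', assoc, hfac']
        simp only [assoc]
      rw [h1, h2]
      simp only [Functor.map_comp, hmapmap α']
      simp [assoc]
    rw [key]
    exact I'.comp_mem _ _ hα'
  · intro hmem
    obtain ⟨δ, hδ⟩ := htri₂ F
    refine ⟨iStar.obj (iShriek.obj F), F, jStar.obj (jUpper.obj F),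
      adj₂.counit.app F, adj₄.unit.app F, δ, 𝟙 F, ξ, hδ, (id_comp ξ).symm, ?_, ?_⟩
    · exact ⟨jUpper.obj F, jUpper.obj F, 𝟙 _, adj₄.unit.app F, 𝟙 _,
        trivial, by simp⟩
    · refine ⟨iShriek.obj F, iShriek.obj K, iShriek.map ξ, 𝟙 _,
        adj₂.counit.app K, hmem, ?_⟩
      simpa using (adj₂.counit.naturality ξ).symm
end

section
/- In a recollement (T', T, T''), let I'' be an ideal of T'' and T'→ the ideal of all morphisms of T'. Then the Toda bracket ⟨j_! I'', i_* (T'→)⟩ equals { ξ a morphism of T | j^*(ξ) ∈ I'' }. -/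
open CategoryTheory Category Limits Pretriangulated

/-- In a recollement, `⟨j_! I'', i_* (T'→)⟩ = {ξ | j^*(ξ) ∈ I''}`. -/
theorem stmt13
    {T' T T'' : Type*} [Category T'] [Category T] [Category T'']
    [HasZeroObject T'] [HasZeroObject T] [HasZeroObject T'']
    [Preadditive T'] [Preadditive T] [Preadditive T'']
    [HasShift T' ℤ] [HasShift T ℤ] [HasShift T'' ℤ]
    [∀ n : ℤ, (shiftFunctor T' n).Additive] [∀ n : ℤ, (shiftFunctor T n).Additive]
    [∀ n : ℤ, (shiftFunctor T'' n).Additive]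
    [Pretriangulated T'] [Pretriangulated T] [Pretriangulated T'']
    (iStar : T' ⥤ T) (iUpper : T ⥤ T') (iShriek : T ⥤ T')
    (jShriek : T'' ⥤ T) (jUpper : T ⥤ T'') (jStar : T'' ⥤ T)
    (adj₁ : iUpper ⊣ iStar) (adj₂ : iStar ⊣ iShriek)
    (adj₃ : jShriek ⊣ jUpper) (adj₄ : jUpper ⊣ jStar)
    (hiFF : iStar.FullyFaithful) (hj₁FF : jShriek.FullyFaithful)
    (hj₂FF : jStar.FullyFaithful)
    (hz : ∀ X : T', IsZero (jUpper.obj (iStar.obj X)))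
    (htri₁ : ∀ X : T,
      ∃ δ : iStar.obj (iUpper.obj X) ⟶ (jShriek.obj (jUpper.obj X))⟦(1 : ℤ)⟧,
        Triangle.mk (adj₃.counit.app X) (adj₁.unit.app X) δ ∈ distTriang T)
    (htri₂ : ∀ X : T,
      ∃ δ : jStar.obj (jUpper.obj X) ⟶ (iStar.obj (iShriek.obj X))⟦(1 : ℤ)⟧,
        Triangle.mk (adj₂.counit.app X) (adj₄.unit.app X) δ ∈ distTriang T)
    (I'' : CatIdeal T'') :
    ∀ ⦃F K : T⦄ (ξ : F ⟶ K),
      toda (imageMem jShriek I''.mem) (imageMem iStar (allMor T')) ξ ↔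
        I''.mem (jUpper.map ξ) := by
  
  intro F K ξ
  haveI := hj₁FF.full
  haveI := hj₁FF.faithful
  have homzero : ∀ (Z : T'') (W : T') (f : jShriek.obj Z ⟶ iStar.obj W), f = 0 := by
    intro Z W f
    apply (adj₃.homEquiv Z (iStar.obj W)).injective
    exact (hz W).eq_of_tgt _ _
  constructor
  · rintro ⟨X, M, Y, a, b, h, ξ', ξ'', hdist, rfl,
      ⟨X₀, Y₀, α', g', h'', -, hB⟩, ⟨X₁, Y₁, α, g, h', hα, hA⟩⟩
    have hz1 : (adj₃.counit.app F ≫ ξ') ≫ b = 0 := by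
      rw [Category.assoc, hB, ← Category.assoc, ← Category.assoc,
        homzero _ _ (adj₃.counit.app F ≫ g')]
      simp
    obtain ⟨w, hw⟩ := Pretriangulated.Triangle.coyoneda_exact₂ _ hdist
      (adj₃.counit.app F ≫ ξ') hz1
    have key : adj₃.counit.app F ≫ ξ' ≫ ξ'' = w ≫ g ≫ jShriek.map α ≫ h' := by
      rw [← Category.assoc, show adj₃.counit.app F ≫ ξ' = w ≫ a from hw]
      erw [Category.assoc, hA]
      rfl
    have nat : jUpper.map (jShriek.map α) =
        inv (adj₃.unit.app X₁) ≫ α ≫ adj₃.unit.app Y₁ := by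
      rw [IsIso.eq_inv_comp]
      simpa using (adj₃.unit.naturality α).symm
    have key2 : jUpper.map (ξ' ≫ ξ'') =
        (adj₃.unit.app (jUpper.obj F) ≫ jUpper.map w ≫ jUpper.map g ≫
          inv (adj₃.unit.app X₁)) ≫ α ≫ (adj₃.unit.app Y₁ ≫ jUpper.map h') := by
      have h0 : jUpper.map (ξ' ≫ ξ'') =
          adj₃.unit.app (jUpper.obj F) ≫ jUpper.map (adj₃.counit.app F ≫ ξ' ≫ ξ'') := by
        simp only [Functor.map_comp, ← Category.assoc, adj₃.right_triangle_components]
        simp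
      rw [h0, key]
      simp only [Functor.map_comp, nat, Category.assoc]
      erw [Functor.map_comp, Functor.map_comp, nat]
      simp only [Category.assoc]
    rw [key2]
    exact I''.comp_mem _ _ hα
  · intro hmem
    obtain ⟨δ, hdist⟩ := htri₁ F
    refine ⟨_, _, _, adj₃.counit.app F, adj₁.unit.app F, δ, 𝟙 F, ξ, hdist, by simp,
      ⟨iUpper.obj F, iUpper.obj F, 𝟙 _, adj₁.unit.app F, 𝟙 _, trivial, by simp⟩,
      ⟨jUpper.obj F, jUpper.obj K, jUpper.map ξ, 𝟙 _, adj₃.counit.app K, hmem, ?_⟩⟩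
    simpa using (adj₃.counit.naturality ξ).symm
end

section
/- In a recollement (T', T, T''), let J' be an ideal of T' and J'' an ideal of T''. Then the product of Toda bracket ideals satisfies ⟨i_* J', j_* (T''→)⟩ ∘ ⟨i_* (T'→), j_* J''⟩ = ⟨i_* J', j_* J''⟩, where the product of two ideals A, B is the ideal of all composites a ∘ b with a ∈ A, b ∈ B (suitably composable), T'→ and T''→ are the ideals of all morphisms, and the Toda bracket is defined via factorization through distinguished triangles as usual. One inclusion uses Hom_T(i_* X', j_* Y'') = 0; the other uses the existence of base change and cobase change for distinguished triangles (homotopy pushout/pullback of triangles). -/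
open CategoryTheory Category Limits Pretriangulated

/-- The product `A ∘ B` of two morphism classes: composites `b ≫ a` with `b ∈ B`, `a ∈ A`. -/
def prodMem {C : Type*} [Category C] (A B : MorphismClass C) : MorphismClass C :=
  fun F K ξ => ∃ (M : C) (b : F ⟶ M) (a : M ⟶ K), B b ∧ A a ∧ ξ = b ≫ a

/-- In a recollement, `⟨i_* J', j_* (T''→)⟩ ∘ ⟨i_* (T'→), j_* J''⟩ = ⟨i_* J', j_* J''⟩`. -/
theorem stmt14
    {T' T T'' : Type*} [Category T'] [Category T] [Category T'']
    [HasZeroObject T'] [HasZeroObject T] [HasZeroObject T'']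
    [Preadditive T'] [Preadditive T] [Preadditive T'']
    [HasShift T' ℤ] [HasShift T ℤ] [HasShift T'' ℤ]
    [∀ n : ℤ, (shiftFunctor T' n).Additive] [∀ n : ℤ, (shiftFunctor T n).Additive]
    [∀ n : ℤ, (shiftFunctor T'' n).Additive]
    [Pretriangulated T'] [Pretriangulated T] [Pretriangulated T'']
    (iStar : T' ⥤ T) (iUpper : T ⥤ T') (iShriek : T ⥤ T')
    (jShriek : T'' ⥤ T) (jUpper : T ⥤ T'') (jStar : T'' ⥤ T)
    (adj₁ : iUpper ⊣ iStar) (adj₂ : iStar ⊣ iShriek)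
    (adj₃ : jShriek ⊣ jUpper) (adj₄ : jUpper ⊣ jStar)
    (hiFF : iStar.FullyFaithful) (hj₁FF : jShriek.FullyFaithful)
    (hj₂FF : jStar.FullyFaithful)
    (hz : ∀ X : T', IsZero (jUpper.obj (iStar.obj X)))
    (htri₁ : ∀ X : T,
      ∃ δ : iStar.obj (iUpper.obj X) ⟶ (jShriek.obj (jUpper.obj X))⟦(1 : ℤ)⟧,
        Triangle.mk (adj₃.counit.app X) (adj₁.unit.app X) δ ∈ distTriang T)
    (htri₂ : ∀ X : T,
      ∃ δ : jStar.obj (jUpper.obj X) ⟶ (iStar.obj (iShriek.obj X))⟦(1 : ℤ)⟧,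
        Triangle.mk (adj₂.counit.app X) (adj₄.unit.app X) δ ∈ distTriang T)
    (J' : CatIdeal T') (J'' : CatIdeal T'') :
    ∀ ⦃F K : T⦄ (ξ : F ⟶ K),
      prodMem (toda (imageMem iStar J'.mem) (imageMem jStar (allMor T'')))
        (toda (imageMem iStar (allMor T')) (imageMem jStar J''.mem)) ξ ↔
      toda (imageMem iStar J'.mem) (imageMem jStar J''.mem) ξ := by
  -- Key vanishing: `Hom(i_* X', j_* Y'') = 0`.
  have hvan : ∀ (X' : T') (Y'' : T'') (f : iStar.obj X' ⟶ jStar.obj Y''), f = 0 := by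
    intro X' Y'' f
    exact (adj₄.homEquiv _ _).symm.injective ((hz X').eq_of_src _ _)
  intro F K ξ
  constructor
  · -- product ⊆ bracket, via the recollement triangle at the middle object
    rintro ⟨L, Bm, Am, hBm, hAm, hξ⟩
    obtain ⟨X₁, M₁, Y₁, a₁, b₁, h₁, β', β'', hΔ₁, hBs, hb, ha⟩ := hBm
    obtain ⟨X₂, M₂, Y₂, a₂, b₂, h₂, α', α'', hΔ₂, hAs, hb₂, ha₂⟩ := hAm
    obtain ⟨δ, hδ⟩ := htri₂ L
    refine ⟨_, L, _, adj₂.counit.app L, adj₄.unit.app L, δ, Bm, Am, hδ, hξ, ?_, ?_⟩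
    · -- `Bm ≫ unit ∈ j_* J''`
      obtain ⟨P, Q, γ, g₁, h₁', -, he⟩ := ha
      have h0 : a₁ ≫ (β'' ≫ adj₄.unit.app L) = 0 := by
        have hz1 : h₁' ≫ adj₄.unit.app L = 0 := hvan _ _ _
        rw [← assoc, he]
        simp [reassoc_of% hz1, hz1]
      obtain ⟨t, ht⟩ := Triangle.yoneda_exact₂ _ hΔ₁ (β'' ≫ adj₄.unit.app L) h0
      obtain ⟨A'', B'', β, g, h₀, hβ, heq⟩ := hb
      refine ⟨A'', B'', β, g, h₀ ≫ t, hβ, ?_⟩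
      erw [hBs, assoc, ht]
      dsimp at ht ⊢
      rw [← assoc]
      simp [reassoc_of% heq]
      exact (reassoc_of% heq) t
    · -- `counit ≫ Am ∈ i_* J'`
      obtain ⟨P, Q, γ₂, g₂, h₂', -, he₂⟩ := hb₂
      have h0 : (adj₂.counit.app L ≫ α') ≫ b₂ = 0 := by
        have hz2 : adj₂.counit.app L ≫ g₂ = 0 := hvan _ _ _
        rw [assoc, he₂]
        simp [reassoc_of% hz2]
      obtain ⟨s, hs⟩ := Triangle.coyoneda_exact₂ _ hΔ₂ (adj₂.counit.app L ≫ α') h0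
      obtain ⟨A', B', α, g₂', h₂'', hα, he₃⟩ := ha₂
      refine ⟨A', B', α, s ≫ g₂', h₂'', hα, ?_⟩
      dsimp at hs
      erw [hAs, ← assoc, hs, assoc, he₃]
      simp
      exact (assoc s g₂' _).symm
  · -- bracket ⊆ product, via base/cobase change of the triangle
    rintro ⟨X, M, Y, a, b, h, ξ', ξ'', hΔ, hξ, hb, ha⟩
    obtain ⟨A'', B'', β, g, h₀, hβ, hBeq⟩ := hb
    obtain ⟨A', B', α, g', h', hα, hAeq⟩ := ha
    -- the doubly-changed triangle `i_* A' → Ms → j_* B''`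
    obtain ⟨Mt, at_, bt, hΔt⟩ := distinguished_cocone_triangle₂ (h₀ ≫ h)
    obtain ⟨Ms, as, bs, hΔs⟩ :=
      distinguished_cocone_triangle₂ ((h₀ ≫ h) ≫ g'⟦(1 : ℤ)⟧')
    -- comparison map `mt : Mt ⟶ M`
    obtain ⟨mt, hmt₁, hmt₂⟩ := complete_distinguished_triangle_morphism₂
      (Triangle.mk at_ bt (h₀ ≫ h)) (Triangle.mk a b h) hΔt hΔ (𝟙 X) h₀
      (by simp; erw [CategoryTheory.Functor.map_id]; exact comp_id _)
    -- comparison map `nt : Mt ⟶ Ms`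
    obtain ⟨nt, hnt₁, hnt₂⟩ := complete_distinguished_triangle_morphism₂
      (Triangle.mk at_ bt (h₀ ≫ h)) (Triangle.mk as bs ((h₀ ≫ h) ≫ g'⟦(1 : ℤ)⟧'))
      hΔt hΔs g' (𝟙 _) (by simp; erw [id_comp, assoc])
    change Mt ⟶ M at mt
    change Mt ⟶ Ms at nt
    replace hmt₁ : at_ ≫ mt = 𝟙 X ≫ a := hmt₁
    replace hmt₂ : bt ≫ h₀ = mt ≫ b := hmt₂
    replace hnt₁ : at_ ≫ nt = g' ≫ as := hnt₁
    replace hnt₂ : bt ≫ 𝟙 (jStar.obj B'') = nt ≫ bs := hnt₂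
    rw [id_comp] at hmt₁
    rw [comp_id] at hnt₂
    -- lift `pt : F ⟶ Mt` of `g ≫ j_* β`
    have hbh : b ≫ h = 0 := comp_distTriang_mor_zero₂₃ _ hΔ
    obtain ⟨pt, hpt⟩ := Triangle.coyoneda_exact₃ _ hΔt (g ≫ jStar.map β) (by
      change (g ≫ jStar.map β) ≫ (h₀ ≫ h) = 0
      simp only [assoc]
      rw [← reassoc_of% hBeq, hbh, comp_zero])
    change F ⟶ Mt at pt
    replace hpt : g ≫ jStar.map β = pt ≫ bt := hpt
    -- extension `A₀ : Ms ⟶ K` of `i_* α ≫ h'` along `as`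
    have hha : h ≫ a⟦(1 : ℤ)⟧' = 0 := comp_distTriang_mor_zero₃₁ _ hΔ
    obtain ⟨A₀, hA₀, -⟩ := complete_distinguished_triangle_morphism₂
      (Triangle.mk as bs ((h₀ ≫ h) ≫ g'⟦(1 : ℤ)⟧')) (contractibleTriangle K)
      hΔs (contractible_distinguished K) (iStar.map α ≫ h') 0 (by
        change ((h₀ ≫ h) ≫ g'⟦(1 : ℤ)⟧') ≫ (iStar.map α ≫ h')⟦(1 : ℤ)⟧' = 0 ≫ (0 : _ ⟶ K⟦(1 : ℤ)⟧)
        rw [comp_zero]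
        have hsh : g'⟦(1 : ℤ)⟧' ≫ (iStar.map α ≫ h')⟦(1 : ℤ)⟧'
            = a⟦(1 : ℤ)⟧' ≫ ξ''⟦(1 : ℤ)⟧' := by
          rw [← Functor.map_comp, ← Functor.map_comp, ← hAeq, Functor.map_comp]
        rw [assoc, assoc, hsh]
        rw [reassoc_of% hha]
        simp)
    change Ms ⟶ K at A₀
    replace hA₀ : as ≫ A₀ = (iStar.map α ≫ h') ≫ 𝟙 K := hA₀
    rw [comp_id] at hA₀
    -- error term `f₀ : F ⟶ X`
    obtain ⟨f₀, hf₀⟩ := Triangle.coyoneda_exact₂ _ hΔ (ξ' - pt ≫ mt) (by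
      change (ξ' - pt ≫ mt) ≫ b = 0
      rw [Preadditive.sub_comp, assoc, ← hmt₂, ← assoc, ← hpt, hBeq]
      simp)
    change F ⟶ X at f₀
    replace hf₀ : ξ' - pt ≫ mt = f₀ ≫ a := hf₀
    -- error term `t : j_* B'' ⟶ K`
    obtain ⟨t, ht⟩ := Triangle.yoneda_exact₂ _ hΔt (mt ≫ ξ'' - nt ≫ A₀) (by
      change at_ ≫ (mt ≫ ξ'' - nt ≫ A₀) = 0
      rw [Preadditive.comp_sub, ← assoc, ← assoc, hmt₁, hnt₁, assoc, hA₀, ← hAeq, sub_self])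
    change jStar.obj B'' ⟶ K at t
    replace ht : mt ≫ ξ'' - nt ≫ A₀ = bt ≫ t := ht
    have hasbs : as ≫ bs = 0 := comp_distTriang_mor_zero₁₂ _ hΔs
    -- the two factors
    refine ⟨Ms, pt ≫ nt + (f₀ ≫ g') ≫ as, A₀ + bs ≫ t, ?_, ?_, ?_⟩
    · -- first factor lies in `⟨i_* all, j_* J''⟩`
      refine ⟨iStar.obj A', Ms, jStar.obj B'', as, bs, (h₀ ≫ h) ≫ g'⟦(1 : ℤ)⟧',
        pt ≫ nt + (f₀ ≫ g') ≫ as, 𝟙 Ms, hΔs, by simp, ?_, ?_⟩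
      · refine ⟨A'', B'', β, g, 𝟙 _, hβ, ?_⟩
        have expand : (pt ≫ nt + (f₀ ≫ g') ≫ as) ≫ bs
            = pt ≫ (nt ≫ bs) + f₀ ≫ (g' ≫ (as ≫ bs)) := by simp
        rw [expand, ← hnt₂, hasbs, ← hpt]
        simp
      · exact ⟨A', A', 𝟙 A', 𝟙 _, as, trivial, by simp⟩
    · -- second factor lies in `⟨i_* J', j_* all⟩`
      refine ⟨iStar.obj A', Ms, jStar.obj B'', as, bs, (h₀ ≫ h) ≫ g'⟦(1 : ℤ)⟧',
        𝟙 Ms, A₀ + bs ≫ t, hΔs, by simp, ?_, ?_⟩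
      · exact ⟨B'', B'', 𝟙 B'', bs, 𝟙 _, trivial, by simp⟩
      · refine ⟨A', B', α, 𝟙 _, h', hα, ?_⟩
        rw [Preadditive.comp_add, hA₀, ← assoc, hasbs]
        simp
    · -- the product recovers `ξ`
      have k1 : f₀ ≫ g' ≫ as ≫ A₀ = ξ' ≫ ξ'' - pt ≫ mt ≫ ξ'' := by
        rw [hA₀, ← hAeq, ← assoc, ← hf₀, Preadditive.sub_comp, assoc]
      have k2 : f₀ ≫ g' ≫ as ≫ bs ≫ t = 0 := by
        simp [reassoc_of% hasbs]
      have k3 : pt ≫ nt ≫ bs ≫ t = pt ≫ mt ≫ ξ'' - pt ≫ nt ≫ A₀ := by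
        rw [← reassoc_of% hnt₂, ← ht]
        simp [Preadditive.comp_sub]
      rw [hξ]
      simp only [Preadditive.add_comp, Preadditive.comp_add, assoc]
      rw [k1, k2, k3]
      abel
end

section
/- Let F : C ⥤ D be an additive functor between preadditive categories, and I an ideal of C that is precovering, i.e. every object X of C admits an I-precover, a morphism α : A → X in I such that every morphism in I with target X factors through α. Suppose F has a right adjoint G, let F(I) denote the image ideal, and assume that for every object Y of D there is an object X of C with F(X) ≅ Y. Then the image ideal F(I) is precovering in D: every object Y of D admits an F(I)-precover. -/
open CategoryTheory Category Limits

/-- A morphism class `I` is precovering if every object `X` admits an `I`-precover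
`α : A ⟶ X`, i.e. every `β : B ⟶ X` in `I` factors through `α`. -/
def IsPrecovering {C : Type*} [Category C] (I : MorphismClass C) : Prop :=
  ∀ X : C, ∃ (A : C) (α : A ⟶ X), I α ∧
    ∀ ⦃B : C⦄ (β : B ⟶ X), I β → ∃ γ : B ⟶ A, β = γ ≫ α

/-- If `F ⊣ G` is an adjunction of additive functors, every object of `D` is isomorphic
to some `F(X)`, and `I` is a precovering ideal of `C`, then the image ideal `F(I)` is
precovering in `D`. -/
theorem stmt15 {C D : Type*} [Category C] [Category D] [Preadditive C] [Preadditive D]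
    (F : C ⥤ D) (G : D ⥤ C) [F.Additive] [G.Additive] (adj : F ⊣ G)
    (hess : ∀ Y : D, ∃ X : C, Nonempty (F.obj X ≅ Y))
    (I : CatIdeal C) (hpre : IsPrecovering I.mem) :
    IsPrecovering (imageMem F I.mem) := by
  intro Y
  obtain ⟨A, α, hα, hfac⟩ := hpre (G.obj Y)
  refine ⟨F.obj A, F.map α ≫ adj.counit.app Y,
    ⟨A, G.obj Y, α, 𝟙 _, adj.counit.app Y, hα, by simp⟩, ?_⟩
  rintro B β ⟨X₁, X₂, α', g, h, hα', rfl⟩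
  set φ : X₂ ⟶ G.obj Y := adj.unit.app X₂ ≫ G.map h with hφ
  have hmem : I.mem (α' ≫ φ) := by
    have := I.comp_mem (𝟙 X₁) φ hα'
    simpa using this
  obtain ⟨γ₀, hγ₀⟩ := hfac (α' ≫ φ) hmem
  refine ⟨g ≫ F.map γ₀, ?_⟩
  have key : F.map (α' ≫ φ) ≫ adj.counit.app Y = F.map α' ≫ h := by
    simp [hφ, Adjunction.counit_naturality, Adjunction.left_triangle_components_assoc]
  calc g ≫ F.map α' ≫ h = g ≫ F.map (α' ≫ φ) ≫ adj.counit.app Y := by rw [key]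
    _ = g ≫ F.map (γ₀ ≫ α) ≫ adj.counit.app Y := by rw [hγ₀]
    _ = (g ≫ F.map γ₀) ≫ F.map α ≫ adj.counit.app Y := by simp
end
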